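/- arXiv:1402.3733 — 2 statements merged into one kernel-verified Lean document; each statement's English description precedes it below -/
import Mathlib

section
/- Let D be a strongly positive, Hermitian (D(A,B) = conj(D(B,A))), biadditive (D(A ⊔ B, C) = D(A,C) + D(B,C) for disjoint A, B) and normalized (D(Ω,Ω) = 1) decoherence functional on a finite history space Ω. If μ(Z) := (D(Z,Z)).re = 0 for some Z ⊆ Ω, then μ(Zᶜ) = 1 and the partition {Z, Zᶜ} is consistent, i.e., D(Z, Zᶜ) = 0. -/
open ComplexOrder

/-- Strong positivity of a decoherence functional. -/
def StronglyPositive {Ω : Type*} (D : Set Ω → Set Ω → ℂ) : Prop :=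
  ∀ (n : ℕ) (A : Fin n → Set Ω),
    Matrix.PosSemidef (Matrix.of fun i j => D (A i) (A j))

/-! Strong positivity makes `D Z Z = 0` force `D Zᶜ Z = 0`, since a positive semidefinite
matrix with a zero diagonal entry has a zero column; Hermiticity gives `D Z Zᶜ = 0`, and
biadditivity splits `1 = D Ω Ω` into four terms of which only `D Zᶜ Zᶜ` survives. -/

theorem Matrix.PosSemidef.apply_eq_zero_of_diag_eq_zero {n 𝕜 : Type*} [Fintype n] [RCLike 𝕜]
    {M : Matrix n n 𝕜} (hM : M.PosSemidef) {i : n} (hi : M i i = 0) (j : n) : M j i = 0 := by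
  classical
  have hquad : star (Pi.single i 1) ⬝ᵥ M.mulVec (Pi.single i 1) = 0 := by
    simp [hi]
  have hcol := congrFun ((hM.dotProduct_mulVec_zero_iff _).mp hquad) j
  simpa [mulVec_single_one] using hcol

namespace StronglyPositive

variable {Ω : Type*} {D : Set Ω → Set Ω → ℂ}

theorem apply_self_nonneg (hD : StronglyPositive D) (A : Set Ω) : 0 ≤ D A A :=
  (hD 1 fun _ => A).diag_nonneg (i := 0)

theorem apply_self_eq_zero_of_re_eq_zero (hD : StronglyPositive D) {A : Set Ω}
    (hA : (D A A).re = 0) : D A A = 0 := by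
  rw [Complex.eq_re_of_ofReal_le (hD.apply_self_nonneg A), hA, Complex.ofReal_zero]

theorem apply_eq_zero_of_apply_self_eq_zero (hD : StronglyPositive D) {A : Set Ω}
    (hA : D A A = 0) (B : Set Ω) : D B A = 0 :=
  (hD 2 ![A, B]).apply_eq_zero_of_diag_eq_zero (i := 0) hA 1

end StronglyPositive

theorem apply_univ_univ_eq_of_biadditive {Ω : Type*} {D : Set Ω → Set Ω → ℂ}
    (hHerm : ∀ A B : Set Ω, D A B = star (D B A))
    (hAdd : ∀ A B C : Set Ω, Disjoint A B → D (A ∪ B) C = D A C + D B C) (A : Set Ω) :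
    D Set.univ Set.univ = D A A + D A Aᶜ + (D Aᶜ A + D Aᶜ Aᶜ) := by
  have hAdd_right (B : Set Ω) : D B (A ∪ Aᶜ) = D B A + D B Aᶜ := by
    rw [hHerm, hAdd A Aᶜ B disjoint_compl_right, star_add, ← hHerm, ← hHerm]
  rw [← Set.union_compl_self A, hAdd A Aᶜ _ disjoint_compl_right, hAdd_right, hAdd_right]

theorem measure_zero_complement_general {Ω : Type*}
    (D : Set Ω → Set Ω → ℂ)
    (hHerm : ∀ A B : Set Ω, D A B = star (D B A))
    (hAdd : ∀ A B C : Set Ω, Disjoint A B → D (A ∪ B) C = D A C + D B C)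
    (hSP : StronglyPositive D)
    (hNorm : D Set.univ Set.univ = 1)
    (Z : Set Ω) (hZ : (D Z Z).re = 0) :
    (D Zᶜ Zᶜ).re = 1 ∧ D Z Zᶜ = 0 := by
  have hZZ : D Z Z = 0 := hSP.apply_self_eq_zero_of_re_eq_zero hZ
  have hZcZ : D Zᶜ Z = 0 := hSP.apply_eq_zero_of_apply_self_eq_zero hZZ Zᶜ
  have hZZc : D Z Zᶜ = 0 := by rw [hHerm, hZcZ, star_zero]
  have hZcZc : D Zᶜ Zᶜ = 1 := by
    simpa [hNorm, hZZ, hZZc, hZcZ] using (apply_univ_univ_eq_of_biadditive hHerm hAdd Z).symm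
  exact ⟨by simp [hZcZc], hZZc⟩

theorem measure_zero_complement {Ω : Type*} [Fintype Ω]
    (D : Set Ω → Set Ω → ℂ)
    (hHerm : ∀ A B : Set Ω, D A B = star (D B A))
    (hAdd : ∀ A B C : Set Ω, Disjoint A B → D (A ∪ B) C = D A C + D B C)
    (hSP : StronglyPositive D)
    (hNorm : D Set.univ Set.univ = 1)
    (Z : Set Ω) (hZ : (D Z Z).re = 0) :
    (D Zᶜ Zᶜ).re = 1 ∧ D Z Zᶜ = 0 :=
  measure_zero_complement_general D hHerm hAdd hSP hNorm Z hZ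
end

section
/- The 3×3 real matrix D = [[1/3, −7/24, 7/24], [−7/24, 1/2, −7/24], [7/24, −7/24, 3/4]] is positive semidefinite, symmetric, has all diagonal entries nonnegative, and its entries sum to 1. -/
open Matrix


/-- The decoherence functional matrix of the example in the appendix. -/
noncomputable def exampleD : Matrix (Fin 3) (Fin 3) ℝ :=
  !![1/3, -7/24, 7/24; -7/24, 1/2, -7/24; 7/24, -7/24, 3/4]

theorem Matrix.PosSemidef.isSymm {n R : Type*} [Ring R] [PartialOrder R] [StarRing R]
    [TrivialStar R] {A : Matrix n n R} (hA : A.PosSemidef) : A.IsSymm := by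
  rw [IsSymm, ← conjTranspose_eq_transpose_of_trivial]
  exact hA.isHermitian

-- Multipliers and pivots of symmetric Gaussian elimination on `exampleD`.
noncomputable def exampleDUnitFactor : Matrix (Fin 3) (Fin 3) ℝ :=
  !![1, -7/8, 7/8; 0, 1, -7/47; 0, 0, 1]

noncomputable def exampleDPivots : Fin 3 → ℝ := ![1/3, 47/192, 23/47]

theorem exampleD_eq_ldl :
    exampleD = exampleDUnitFactorᴴ * diagonal exampleDPivots * exampleDUnitFactor := by
  ext i j
  fin_cases i <;> fin_cases j <;>
    simp [exampleD, exampleDUnitFactor, exampleDPivots, mul_apply, Fin.sum_univ_three] <;>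
    norm_num

theorem exampleD_posSemidef : exampleD.PosSemidef := by
  rw [exampleD_eq_ldl]
  refine (PosSemidef.diagonal fun i => ?_).conjTranspose_mul_mul_same _
  fin_cases i <;> norm_num [exampleDPivots]

theorem exampleD_sum_entries : ∑ i, ∑ j, exampleD i j = 1 := by
  simp only [exampleD, Fin.sum_univ_three, of_apply, cons_val', cons_val_zero, cons_val_one,
    cons_val_two, empty_val', cons_val_fin_one, Nat.succ_eq_add_one]
  norm_num

theorem exampleD_is_strongly_positive_df :
    exampleD.PosSemidef ∧ exampleD.IsSymm ∧ (∀ i, 0 ≤ exampleD i i) ∧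
      ∑ i, ∑ j, exampleD i j = 1 :=
  ⟨exampleD_posSemidef, exampleD_posSemidef.isSymm, fun _ => exampleD_posSemidef.diag_nonneg,
    exampleD_sum_entries⟩
end
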